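/- There exist ε ∈ (0, 1/2) and δ > 0 such that every measurable path φ : [0,3] → ℝ satisfying φ(t) > 1/δ for all t ∈ [1+ε, 2−ε] and |φ(t)| < δ for all t ∈ (2,3] has ∫₀³ σ_loc²(t, φ(t)) dt > 6. In particular, the integrated local variance along such paths strictly exceeds the (deterministic) total realized variance 6 of the original mixing model. -/

import Mathlib

/-! On `(0,1]` the branches coincide and `σ_loc² = 2`. Elsewhere `σ_loc²` is the `p±`-weighted
mean of `σ₊²` and `σ₋²`, so it lies in `[1,3]` and is pulled towards the variance of the branch
whose density dominates. Far out in `x` the larger total variance dominates: on `[11/10, 19/10]`,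
above `x = 100`, `p₊ ≥ 3 p₋` and `σ_loc² ≥ 5/2`. Near `x = 0` the smaller total variance
dominates: on `(2,3]`, for `|x| ≤ 1`, `p₋ ≥ p₊` and `σ_loc² ≥ 2`. With `ε = 1/10`, `δ = 1/100`
the integral is therefore at least `2 + 1/10 + 2 + 1/10 + 2 = 31/5`. -/

open Real Set MeasureTheory

/-- `Σ₊(t)`: integrated variance of the `+` branch of the mixing model. -/
noncomputable def Sigp (t : ℝ) : ℝ :=
  if t ≤ 1 then 2 * t else if t ≤ 2 then 3 * t - 1 else t + 3

/-- `Σ₋(t)`: integrated variance of the `−` branch of the mixing model. -/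
noncomputable def Sigm (t : ℝ) : ℝ :=
  if t ≤ 1 then 2 * t else if t ≤ 2 then t + 1 else 3 * t - 3

/-- `σ₊²(t)`: instantaneous variance of the `+` branch. -/
noncomputable def sigp2 (t : ℝ) : ℝ :=
  if t ≤ 1 then 2 else if t ≤ 2 then 3 else 1

/-- `σ₋²(t)`: instantaneous variance of the `−` branch. -/
noncomputable def sigm2 (t : ℝ) : ℝ :=
  if t ≤ 1 then 2 else if t ≤ 2 then 1 else 3

/-- `p₊(t,x) = Σ₊(t)^{-1/2} exp(−(x+Σ₊(t)/2)²/(2Σ₊(t)))`. -/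
noncomputable def pplus (t x : ℝ) : ℝ :=
  Real.exp (-(x + Sigp t / 2) ^ 2 / (2 * Sigp t)) / Real.sqrt (Sigp t)

/-- `p₋(t,x) = Σ₋(t)^{-1/2} exp(−(x+Σ₋(t)/2)²/(2Σ₋(t)))`. -/
noncomputable def pminus (t x : ℝ) : ℝ :=
  Real.exp (-(x + Sigm t / 2) ^ 2 / (2 * Sigm t)) / Real.sqrt (Sigm t)

/-- The Dupire local variance `σ_loc²(t,x)` of the Black–Scholes mixing model. -/
noncomputable def sigloc2 (t x : ℝ) : ℝ :=
  (sigp2 t * pplus t x + sigm2 t * pminus t x) / (pplus t x + pminus t x)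

/-- Up to the factor `1/√(2π)`, the density at `x` of the log-price `-s/2 + √s Z`, `Z ~ N(0,1)`,
of a Black–Scholes model with total variance `s`. -/
noncomputable def logPriceDensity (s x : ℝ) : ℝ :=
  exp (-(x + s / 2) ^ 2 / (2 * s)) / √s

lemma logPriceDensity_pos {s : ℝ} (hs : 0 < s) (x : ℝ) : 0 < logPriceDensity s x :=
  div_pos (exp_pos _) (sqrt_pos.mpr hs)

lemma logPriceDensity_eq_mul {A B : ℝ} (hA : 0 < A) (hB : 0 < B) (x : ℝ) :
    logPriceDensity A x =
      √(B / A) * exp ((A - B) * (x ^ 2 - A * B / 4) / (2 * A * B)) * logPriceDensity B x := by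
  have hexp : -(x + A / 2) ^ 2 / (2 * A) =
      (A - B) * (x ^ 2 - A * B / 4) / (2 * A * B) + -(x + B / 2) ^ 2 / (2 * B) := by
    field_simp
    ring
  rw [logPriceDensity, logPriceDensity, hexp, exp_add, sqrt_div' _ hA.le]
  field_simp

lemma logPriceDensity_le_of_sq_le {A B x : ℝ} (hB : 0 < B) (hBA : B ≤ A)
    (hx : x ^ 2 ≤ A * B / 4) : logPriceDensity A x ≤ logPriceDensity B x := by
  have hA : 0 < A := hB.trans_le hBA
  rw [logPriceDensity_eq_mul hA hB]
  refine mul_le_of_le_one_left (logPriceDensity_pos hB x).le ?_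
  have hsqrt : √(B / A) ≤ 1 := sqrt_le_one.mpr ((div_le_one hA).mpr hBA)
  have hexp : exp ((A - B) * (x ^ 2 - A * B / 4) / (2 * A * B)) ≤ 1 :=
    exp_le_one_iff.mpr (div_nonpos_of_nonpos_of_nonneg
      (mul_nonpos_of_nonneg_of_nonpos (by linarith) (by linarith)) (by positivity))
  exact mul_le_one₀ hsqrt (exp_pos _).le hexp

lemma mul_logPriceDensity_le {A B x k : ℝ} (hB : 0 < B) (hBA : B ≤ A)
    (hk : k * A ≤ B * (1 + (A - B) * (x ^ 2 - A * B / 4) / (2 * A * B))) :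
    k * logPriceDensity B x ≤ logPriceDensity A x := by
  have hA : 0 < A := hB.trans_le hBA
  set D := (A - B) * (x ^ 2 - A * B / 4) / (2 * A * B)
  have hfactor : k ≤ √(B / A) * exp D :=
    calc k ≤ B / A * (1 + D) := by rw [div_mul_eq_mul_div, le_div_iff₀ hA]; linarith
      _ ≤ B / A * exp D := by gcongr; linarith [add_one_le_exp D]
      _ ≤ √(B / A) * exp D := by
        gcongr
        exact le_sqrt_self_iff.mpr ((div_le_one hA).mpr hBA)
  rw [logPriceDensity_eq_mul hA hB]
  exact mul_le_mul_of_nonneg_right hfactor (logPriceDensity_pos hB x).le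

lemma weighted_mean_mem_Icc {m M s₁ s₂ a b : ℝ} (h₁ : s₁ ∈ Icc m M) (h₂ : s₂ ∈ Icc m M)
    (ha : 0 < a) (hb : 0 < b) : (s₁ * a + s₂ * b) / (a + b) ∈ Icc m M := by
  constructor
  · rw [le_div_iff₀ (by positivity)]
    nlinarith [h₁.1, h₂.1]
  · rw [div_le_iff₀ (by positivity)]
    nlinarith [h₁.2, h₂.2]

lemma le_weighted_mean_of_mul_le {k s₁ s₂ a b : ℝ} (hs : s₂ ≤ s₁) (hk : 0 ≤ k) (hb : 0 < b)
    (hab : k * b ≤ a) : (k * s₁ + s₂) / (k + 1) ≤ (s₁ * a + s₂ * b) / (a + b) := by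
  rw [div_le_div_iff₀ (by positivity) (by nlinarith)]
  nlinarith [mul_nonneg (sub_nonneg.mpr hs) (sub_nonneg.mpr hab)]

lemma sigloc2_eq (t x : ℝ) :
    sigloc2 t x = (sigp2 t * logPriceDensity (Sigp t) x + sigm2 t * logPriceDensity (Sigm t) x) /
      (logPriceDensity (Sigp t) x + logPriceDensity (Sigm t) x) := rfl

lemma sigloc2_mem_Icc {t : ℝ} (ht : t ∈ Ioc 0 3) (x : ℝ) : sigloc2 t x ∈ Icc 1 3 := by
  obtain ⟨ht₀, ht₃⟩ := ht
  have hsp : sigp2 t ∈ Icc 1 3 := by unfold sigp2; split_ifs <;> norm_num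
  have hsm : sigm2 t ∈ Icc 1 3 := by unfold sigm2; split_ifs <;> norm_num
  have hSp : 0 < Sigp t := by unfold Sigp; split_ifs <;> linarith
  have hSm : 0 < Sigm t := by unfold Sigm; split_ifs <;> linarith
  exact weighted_mean_mem_Icc hsp hsm (logPriceDensity_pos hSp x) (logPriceDensity_pos hSm x)

lemma two_le_sigloc2_of_le_one {t : ℝ} (ht : t ∈ Ioc 0 1) (x : ℝ) : 2 ≤ sigloc2 t x := by
  obtain ⟨ht₀, ht₁⟩ := ht
  have hpos : 0 < logPriceDensity (2 * t) x := logPriceDensity_pos (by linarith) x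
  rw [sigloc2_eq]
  simp only [Sigp, Sigm, sigp2, sigm2, if_pos ht₁]
  exact (weighted_mean_mem_Icc (m := 2) (M := 2) (by simp) (by simp) hpos hpos).1

lemma five_halves_le_sigloc2 {t x : ℝ} (ht : t ∈ Icc (11 / 10) (19 / 10)) (hx : 100 ≤ x) :
    5 / 2 ≤ sigloc2 t x := by
  obtain ⟨ht₁, ht₂⟩ := ht
  have hx2 : 10000 ≤ x ^ 2 := by nlinarith
  have hD : 14 ≤ (3 * t - 1 - (t + 1)) * (x ^ 2 - (3 * t - 1) * (t + 1) / 4) /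
      (2 * (3 * t - 1) * (t + 1)) := by
    have hAB : (3 * t - 1) * (t + 1) ≤ 14 := by nlinarith
    rw [le_div_iff₀ (by nlinarith)]
    nlinarith [mul_le_mul_of_nonneg_right (show 1 / 5 ≤ 3 * t - 1 - (t + 1) by linarith)
      (show 0 ≤ x ^ 2 - (3 * t - 1) * (t + 1) / 4 by nlinarith)]
  have hdom : 3 * logPriceDensity (t + 1) x ≤ logPriceDensity (3 * t - 1) x :=
    mul_logPriceDensity_le (by linarith) (by linarith) (by nlinarith)
  rw [sigloc2_eq]
  simp only [Sigp, Sigm, sigp2, sigm2, if_neg (show ¬t ≤ 1 by linarith),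
    if_pos (show t ≤ 2 by linarith)]
  calc (5 / 2 : ℝ) = (3 * 3 + 1) / (3 + 1) := by norm_num
    _ ≤ _ := le_weighted_mean_of_mul_le (by norm_num) (by norm_num)
        (logPriceDensity_pos (by linarith) x) hdom

lemma two_le_sigloc2_of_abs_le_one {t x : ℝ} (ht : t ∈ Ioc 2 3) (hx : |x| ≤ 1) :
    2 ≤ sigloc2 t x := by
  obtain ⟨ht₂, ht₃⟩ := ht
  have hx2 : x ^ 2 ≤ 1 := by nlinarith [sq_abs x, abs_nonneg x]
  have hdom : logPriceDensity (t + 3) x ≤ logPriceDensity (3 * t - 3) x :=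
    logPriceDensity_le_of_sq_le (by linarith) (by linarith) (by nlinarith)
  rw [sigloc2_eq]
  simp only [Sigp, Sigm, sigp2, sigm2, if_neg (show ¬t ≤ 1 by linarith), if_neg (not_le.mpr ht₂)]
  rw [add_comm (1 * _), add_comm (logPriceDensity (t + 3) x)]
  calc (2 : ℝ) = (1 * 3 + 1) / (1 + 1) := by norm_num
    _ ≤ _ := le_weighted_mean_of_mul_le (by norm_num) (by norm_num)
        (logPriceDensity_pos (by linarith) x) (by linarith)

@[fun_prop]
lemma measurable_ite_le {α β : Type*} [TopologicalSpace α] [MeasurableSpace α]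
    [OpensMeasurableSpace α] [LinearOrder α] [ClosedIicTopology α] [MeasurableSpace β]
    {f g : α → β} {c : α} (hf : Measurable f) (hg : Measurable g) :
    Measurable fun t => if t ≤ c then f t else g t :=
  Measurable.ite measurableSet_Iic hf hg

lemma measurable_sigloc2_comp {φ : ℝ → ℝ} (hφ : Measurable φ) :
    Measurable fun t => sigloc2 t (φ t) := by
  unfold sigloc2 pplus pminus Sigp Sigm sigp2 sigm2
  fun_prop

lemma intervalIntegrable_sigloc2_comp {φ : ℝ → ℝ} (hφ : Measurable φ) :
    IntervalIntegrable (fun t => sigloc2 t (φ t)) volume 0 3 := by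
  rw [intervalIntegrable_iff_integrableOn_Ioc_of_le (by norm_num)]
  refine Measure.integrableOn_of_bounded (M := 3) measure_Ioc_lt_top.ne
    (measurable_sigloc2_comp hφ).aestronglyMeasurable ?_
  filter_upwards [ae_restrict_mem measurableSet_Ioc] with t ht
  obtain ⟨hlo, hhi⟩ := sigloc2_mem_Icc ht (φ t)
  rw [Real.norm_eq_abs, abs_le]
  constructor <;> linarith

lemma mul_sub_le_intervalIntegral {f : ℝ → ℝ} {a b c : ℝ} (hab : a ≤ b)
    (hf : IntervalIntegrable f volume a b) (h : ∀ t ∈ Ioo a b, c ≤ f t) :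
    c * (b - a) ≤ ∫ t in a..b, f t :=
  calc c * (b - a) = ∫ _ in a..b, c := by simp [mul_comm]
    _ ≤ ∫ t in a..b, f t := intervalIntegral.integral_mono_on_of_le_Ioo hab
        intervalIntegrable_const hf h

lemma thirty_one_fifths_le_integral_sigloc2_comp {φ : ℝ → ℝ} (hφ : Measurable φ)
    (hlarge : ∀ t ∈ Icc (11 / 10 : ℝ) (19 / 10), 100 ≤ φ t)
    (hsmall : ∀ t ∈ Ioc (2 : ℝ) 3, |φ t| ≤ 1) :
    31 / 5 ≤ ∫ t in (0 : ℝ)..3, sigloc2 t (φ t) := by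
  have hI : ∀ a ∈ Icc (0 : ℝ) 3, ∀ b ∈ Icc (0 : ℝ) 3,
      IntervalIntegrable (fun t => sigloc2 t (φ t)) volume a b := fun a ha b hb =>
    (intervalIntegrable_sigloc2_comp hφ).mono_set
      (uIcc_subset_uIcc (by rwa [uIcc_of_le (by norm_num)]) (by rwa [uIcc_of_le (by norm_num)]))
  have hsplit : ∀ a ∈ Icc (0 : ℝ) 3, ∀ b ∈ Icc (0 : ℝ) 3, ∀ c ∈ Icc (0 : ℝ) 3,
      (∫ t in a..b, sigloc2 t (φ t)) + ∫ t in b..c, sigloc2 t (φ t) =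
        ∫ t in a..c, sigloc2 t (φ t) := fun a ha b hb c hc =>
    intervalIntegral.integral_add_adjacent_intervals (hI a ha b hb) (hI b hb c hc)
  calc (31 / 5 : ℝ) = 2 * (1 - 0) + 1 * (11 / 10 - 1) + 5 / 2 * (19 / 10 - 11 / 10)
        + 1 * (2 - 19 / 10) + 2 * (3 - 2) := by norm_num
    _ ≤ (∫ t in 0..1, sigloc2 t (φ t)) + (∫ t in 1..11 / 10, sigloc2 t (φ t))
        + (∫ t in 11 / 10..19 / 10, sigloc2 t (φ t)) + (∫ t in 19 / 10..2, sigloc2 t (φ t))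
        + ∫ t in 2..3, sigloc2 t (φ t) := by
      gcongr ?_ + ?_ + ?_ + ?_ + ?_ <;>
        refine mul_sub_le_intervalIntegral (by norm_num) (hI _ (by norm_num) _ (by norm_num))
          fun t ht => ?_
      · exact two_le_sigloc2_of_le_one (Ioo_subset_Ioc_self ht) _
      · exact (sigloc2_mem_Icc ⟨by linarith [ht.1], by linarith [ht.2]⟩ _).1
      · exact five_halves_le_sigloc2 (Ioo_subset_Icc_self ht) (hlarge t (Ioo_subset_Icc_self ht))
      · exact (sigloc2_mem_Icc ⟨by linarith [ht.1], by linarith [ht.2]⟩ _).1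
      · exact two_le_sigloc2_of_abs_le_one (Ioo_subset_Ioc_self ht)
          (hsmall t (Ioo_subset_Ioc_self ht))
    _ = ∫ t in 0..3, sigloc2 t (φ t) := by
      rw [hsplit, hsplit, hsplit, hsplit] <;> norm_num

/-- There exist `ε ∈ (0,1/2)` and `δ > 0` such that every measurable path `φ` which is
large (`φ(t) > 1/δ`) on `[1+ε, 2−ε]` and small (`|φ(t)| < δ`) on `(2,3]` has integrated
local variance strictly larger than `6`, the deterministic total realized variance of
the original mixing model. -/
theorem exists_paths_with_integral_gt_six :
    ∃ ε ∈ Set.Ioo (0 : ℝ) (1 / 2), ∃ δ > (0 : ℝ), ∀ φ : ℝ → ℝ, Measurable φ →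
      (∀ t ∈ Set.Icc (1 + ε) (2 - ε), 1 / δ < φ t) →
      (∀ t ∈ Set.Ioc (2 : ℝ) 3, |φ t| < δ) →
      6 < ∫ t in (0 : ℝ)..3, sigloc2 t (φ t) := by
  refine ⟨1 / 10, by norm_num, 1 / 100, by norm_num, fun φ hφ hlarge hsmall => ?_⟩
  have hlarge' : ∀ t ∈ Icc (11 / 10 : ℝ) (19 / 10), 100 ≤ φ t := fun t ht => by
    simpa only [one_div_one_div] using (hlarge t ⟨by linarith [ht.1], by linarith [ht.2]⟩).le
  have hsmall' : ∀ t ∈ Ioc (2 : ℝ) 3, |φ t| ≤ 1 := fun t ht =>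
    (hsmall t ht).le.trans (by norm_num)
  linarith [thirty_one_fifths_le_integral_sigloc2_comp hφ hlarge' hsmall']
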